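/- arXiv:2402.17631 — 10 statements merged into one kernel-verified Lean document; each statement's English description precedes it below -/
import Mathlib

section
/- At least half (rounded down) of the elements lie in gaps of size at least Δ; precisely, 2·∑_{j : Δ_j ≥ Δ} Δ_j ≥ N + 1, equivalently ∑_{j : Δ_j ≥ Δ} Δ_j ≥ ⌊N/2⌋ + 1. -/
/-!
Let `i` be a largest gap among those smaller than `Δ`. The gaps no larger than this one are
exactly the gaps smaller than `Δ`, so by the minimality of `Δ` they cover at most half of the
`N + 1` elements; the remaining gaps, all of size at least `Δ`, cover the rest.
-/

open Finset

theorem sum_Icc_tsub_add_eq {r : ℕ → ℕ} {m : ℕ} (hr : ∀ i < m, r i ≤ r (i + 1)) :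
    r 0 + ∑ j ∈ Icc 1 m, (r j - r (j - 1)) = r m := by
  induction m with
  | zero => simp
  | succ n ih =>
    rw [sum_Icc_succ_top (by omega), ← add_assoc, ih fun i hi => hr i (by omega),
      Nat.add_sub_cancel, Nat.add_sub_cancel' (hr n n.lt_succ_self)]

section Threshold

variable {ι : Type*} (s : Finset ι) (f : ι → ℕ) (d : ℕ)

theorem two_mul_sum_filter_lt_le
    (hmin : ∀ i ∈ s, ∑ j ∈ s, f j < 2 * ∑ j ∈ s.filter (fun j => f j ≤ f i), f j → d ≤ f i) :
    2 * ∑ j ∈ s.filter (fun j => f j < d), f j ≤ ∑ j ∈ s, f j := by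
  set small := s.filter (fun j => f j < d)
  by_contra! hlarge
  have hne : small.Nonempty := by
    by_contra! hempty
    simp [hempty] at hlarge
  obtain ⟨i, hi, hmax⟩ := exists_max_image small f hne
  obtain ⟨his, hid⟩ := mem_filter.mp hi
  have hsmall : s.filter (fun j => f j ≤ f i) = small := by
    ext j
    simp only [small, mem_filter]
    constructor
    · rintro ⟨hj, hji⟩
      exact ⟨hj, hji.trans_lt hid⟩
    · rintro ⟨hj, hjd⟩
      exact ⟨hj, hmax j (mem_filter.mpr ⟨hj, hjd⟩)⟩
  have := hmin i his (hsmall ▸ hlarge)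
  omega

theorem sum_le_two_mul_sum_filter_le
    (hmin : ∀ i ∈ s, ∑ j ∈ s, f j < 2 * ∑ j ∈ s.filter (fun j => f j ≤ f i), f j → d ≤ f i) :
    ∑ j ∈ s, f j ≤ 2 * ∑ j ∈ s.filter (fun j => d ≤ f j), f j := by
  have hsplit := sum_filter_add_sum_filter_not s (fun j => d ≤ f j) f
  simp only [not_le] at hsplit
  have := two_mul_sum_filter_lt_le s f d hmin
  omega

end Threshold

theorem statement2_general (N q : ℕ)
    (r : ℕ → ℕ) (hr0 : r 0 = 0) (hrq : r (q + 1) = N + 1)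
    (hmono : ∀ i, i ≤ q → r i < r (i + 1))
    (Δ : ℕ)
    (hΔmin : ∀ i ∈ Finset.Icc 1 (q + 1),
        N + 2 ≤ 2 * ∑ j ∈ (Finset.Icc 1 (q + 1)).filter
            (fun j => r j - r (j - 1) ≤ r i - r (i - 1)), (r j - r (j - 1)) →
        Δ ≤ r i - r (i - 1)) :
    N + 1 ≤ 2 * ∑ j ∈ (Finset.Icc 1 (q + 1)).filter
        (fun j => Δ ≤ r j - r (j - 1)), (r j - r (j - 1))
    ∧ N / 2 + 1 ≤ ∑ j ∈ (Finset.Icc 1 (q + 1)).filter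
        (fun j => Δ ≤ r j - r (j - 1)), (r j - r (j - 1)) := by
  have htotal : ∑ j ∈ Icc 1 (q + 1), (r j - r (j - 1)) = N + 1 := by
    have := sum_Icc_tsub_add_eq (r := r) (m := q + 1) fun i hi => (hmono i (by omega)).le
    omega
  have hhalf := sum_le_two_mul_sum_filter_le (Icc 1 (q + 1)) (fun j => r j - r (j - 1)) Δ
    fun i hi hlt => hΔmin i hi (by rw [htotal] at hlt; exact hlt)
  rw [htotal] at hhalf
  omega

/-- At least half (rounded down) of the elements lie in gaps of size at
least `Δ`; precisely, `2·∑_{j : Δ j ≥ Δ} Δ j ≥ N + 1`, equivalently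
`∑_{j : Δ j ≥ Δ} Δ j ≥ ⌊N/2⌋ + 1`. -/
theorem statement2 (N q : ℕ) (hN : 1 ≤ N) (hq : 1 ≤ q)
    (r : ℕ → ℕ) (hr0 : r 0 = 0) (hrq : r (q + 1) = N + 1)
    (hmono : ∀ i, i ≤ q → r i < r (i + 1))
    (Δ : ℕ)
    (hΔmem : ∃ i ∈ Finset.Icc 1 (q + 1), r i - r (i - 1) = Δ)
    (hΔge : N + 2 ≤ 2 * ∑ j ∈ (Finset.Icc 1 (q + 1)).filter
        (fun j => r j - r (j - 1) ≤ Δ), (r j - r (j - 1)))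
    (hΔmin : ∀ i ∈ Finset.Icc 1 (q + 1),
        N + 2 ≤ 2 * ∑ j ∈ (Finset.Icc 1 (q + 1)).filter
            (fun j => r j - r (j - 1) ≤ r i - r (i - 1)), (r j - r (j - 1)) →
        Δ ≤ r i - r (i - 1)) :
    N + 1 ≤ 2 * ∑ j ∈ (Finset.Icc 1 (q + 1)).filter
        (fun j => Δ ≤ r j - r (j - 1)), (r j - r (j - 1))
    ∧ N / 2 + 1 ≤ ∑ j ∈ (Finset.Icc 1 (q + 1)).filter
        (fun j => Δ ≤ r j - r (j - 1)), (r j - r (j - 1)) :=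
  statement2_general N q r hr0 hrq hmono Δ hΔmin
end

section
/- In the non-sorting case, the comparison potential released by one partitioning round is at least (N/2)·log₂(N/Δ) + N/2; precisely, if Δ ≤ N then (∑_{i : Δ_i ≤ Δ} Δ_i)·log₂(N/Δ) + ∑_{i : Δ_i ≥ Δ} Δ_i ≥ (N/2)·log₂(N/Δ) + N/2. -/
/-!
By the choice of `Δ`, the gaps of size `≤ Δ` carry at least `N/2 + 1`
of the `N + 1` elements. By its minimality, the gaps of size `< Δ` carry at most `(N + 1)/2`:
otherwise the largest such gap would already be an admissible threshold below `Δ`. Hence the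
gaps of size `≥ Δ` carry at least `N/2` elements too, and since `log₂(N/Δ) ≥ 0`, both halves
of the bound follow termwise.
-/

open Finset

theorem sum_Icc_tsub_pred_add {r : ℕ → ℕ} {n : ℕ} (hmono : ∀ i < n, r i ≤ r (i + 1)) :
    ∑ i ∈ Icc 1 n, (r i - r (i - 1)) + r 0 = r n := by
  induction n with
  | zero => simp
  | succ n ih =>
    rw [sum_Icc_succ_top (by omega), Nat.add_sub_cancel]
    have := ih fun i hi => hmono i (by omega)
    have := hmono n n.lt_succ_self
    omega

theorem sum_filter_lt_of_forall_le_of_le_sum {ι : Type*} {s : Finset ι} {g w : ι → ℕ}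
    {T Δ : ℕ} (hT : 0 < T)
    (hmin : ∀ i ∈ s, T ≤ ∑ j ∈ s with g j ≤ g i, w j → Δ ≤ g i) :
    ∑ j ∈ s with g j < Δ, w j < T := by
  by_contra! hge
  obtain ⟨i, hi, hmax⟩ := exists_max_image {j ∈ s | g j < Δ} g
    (nonempty_of_sum_ne_zero (f := w) (by omega))
  rw [mem_filter] at hi
  have hsub : {j ∈ s | g j < Δ} ⊆ {j ∈ s | g j ≤ g i} := fun j hj =>
    mem_filter.mpr ⟨(mem_filter.mp hj).1, hmax j hj⟩
  have := hmin i hi.1 (hge.trans (sum_le_sum_of_subset hsub))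
  omega

theorem logb_div_nonneg_of_le {N Δ : ℕ} (h : Δ ≤ N) : 0 ≤ Real.logb 2 ((N : ℝ) / Δ) := by
  rcases Nat.eq_zero_or_pos Δ with rfl | hΔ
  · simp
  · apply Real.logb_nonneg one_lt_two
    rw [one_le_div (by exact_mod_cast hΔ)]
    exact_mod_cast h

theorem statement7_general (N q : ℕ)
    (r : ℕ → ℕ) (hr0 : r 0 = 0) (hrq : r (q + 1) = N + 1)
    (hmono : ∀ i, i ≤ q → r i < r (i + 1))
    (Δ : ℕ)
    (hΔge : N + 2 ≤ 2 * ∑ j ∈ (Finset.Icc 1 (q + 1)).filter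
        (fun j => r j - r (j - 1) ≤ Δ), (r j - r (j - 1)))
    (hΔmin : ∀ i ∈ Finset.Icc 1 (q + 1),
        N + 2 ≤ 2 * ∑ j ∈ (Finset.Icc 1 (q + 1)).filter
            (fun j => r j - r (j - 1) ≤ r i - r (i - 1)), (r j - r (j - 1)) →
        Δ ≤ r i - r (i - 1))
    (hΔN : Δ ≤ N) :
    (N : ℝ) / 2 * Real.logb 2 ((N : ℝ) / (Δ : ℝ)) + (N : ℝ) / 2 ≤
      ((∑ i ∈ (Finset.Icc 1 (q + 1)).filter
          (fun i => r i - r (i - 1) ≤ Δ), (r i - r (i - 1)) : ℕ) : ℝ)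
        * Real.logb 2 ((N : ℝ) / (Δ : ℝ))
      + ((∑ i ∈ (Finset.Icc 1 (q + 1)).filter
          (fun i => Δ ≤ r i - r (i - 1)), (r i - r (i - 1)) : ℕ) : ℝ) := by
  have htotal : ∑ i ∈ Icc 1 (q + 1), (r i - r (i - 1)) = N + 1 := by
    have := sum_Icc_tsub_pred_add (n := q + 1) fun i hi => (hmono i (by omega)).le
    omega
  have hsmall : ∑ j ∈ Icc 1 (q + 1) with r j - r (j - 1) < Δ, 2 * (r j - r (j - 1)) < N + 2 :=
    sum_filter_lt_of_forall_le_of_le_sum (by omega) fun i hi h => hΔmin i hi (by rwa [mul_sum])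
  have hlarge : N + 1 ≤ 2 * ∑ i ∈ Icc 1 (q + 1) with Δ ≤ r i - r (i - 1), (r i - r (i - 1)) := by
    have hsplit := sum_filter_add_sum_filter_not (Icc 1 (q + 1))
      (fun i => Δ ≤ r i - r (i - 1)) (fun i => r i - r (i - 1))
    simp only [not_le] at hsplit
    rw [← mul_sum] at hsmall
    omega
  refine add_le_add (mul_le_mul_of_nonneg_right ?_ (logb_div_nonneg_of_le hΔN)) ?_ <;>
    rw [div_le_iff₀ two_pos] <;> exact_mod_cast (by omega)

/-- In the non-sorting case, the comparison potential released by one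
partitioning round is at least `(N/2)·log₂(N/Δ) + N/2`; precisely, if `Δ ≤ N` then
`(∑_{i : Δ i ≤ Δ} Δ i)·log₂(N/Δ) + ∑_{i : Δ i ≥ Δ} Δ i ≥ (N/2)·log₂(N/Δ) + N/2`.
Here the gaps are `Δ i = r i − r (i−1)` and `Δ` is the smallest element of
`{Δ 1, …, Δ (q+1)}` satisfying `2·∑_{j : Δ j ≤ Δ} Δ j ≥ N + 2`. -/
theorem statement7 (N q : ℕ) (hN : 1 ≤ N) (hq : 1 ≤ q)
    (r : ℕ → ℕ) (hr0 : r 0 = 0) (hrq : r (q + 1) = N + 1)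
    (hmono : ∀ i, i ≤ q → r i < r (i + 1))
    (Δ : ℕ)
    (hΔmem : ∃ i ∈ Finset.Icc 1 (q + 1), r i - r (i - 1) = Δ)
    (hΔge : N + 2 ≤ 2 * ∑ j ∈ (Finset.Icc 1 (q + 1)).filter
        (fun j => r j - r (j - 1) ≤ Δ), (r j - r (j - 1)))
    (hΔmin : ∀ i ∈ Finset.Icc 1 (q + 1),
        N + 2 ≤ 2 * ∑ j ∈ (Finset.Icc 1 (q + 1)).filter
            (fun j => r j - r (j - 1) ≤ r i - r (i - 1)), (r j - r (j - 1)) →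
        Δ ≤ r i - r (i - 1))
    (hΔN : Δ ≤ N) :
    (N : ℝ) / 2 * Real.logb 2 ((N : ℝ) / (Δ : ℝ)) + (N : ℝ) / 2 ≤
      ((∑ i ∈ (Finset.Icc 1 (q + 1)).filter
          (fun i => r i - r (i - 1) ≤ Δ), (r i - r (i - 1)) : ℕ) : ℝ)
        * Real.logb 2 ((N : ℝ) / (Δ : ℝ))
      + ((∑ i ∈ (Finset.Icc 1 (q + 1)).filter
          (fun i => Δ ≤ r i - r (i - 1)), (r i - r (i - 1)) : ℕ) : ℝ) :=
  statement7_general N q r hr0 hrq hmono Δ hΔge hΔmin hΔN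
end

section
/- In the first sorting case, the released potential covers the sorting cost: for reals N ≥ 1, Δ ≥ 1 and d ≥ 1 with (2N)^d ≥ Δ^{d+1}, one has N/Δ ≥ (1/2)·N^{1/(d+1)} and consequently N + (N/2)·log₂(N/Δ) ≥ (1/(2(d+1)))·N·log₂ N. -/
/-!
Taking `(d+1)`-th roots in `Δ^(d+1) ≤ (2N)^d` gives `Δ ≤ (2N)^(d/(d+1)) ≤ 2 N^(d/(d+1))`, and dividing
`N = N^(1/(d+1)) N^(d/(d+1))` by this bound gives `N/Δ ≥ N^(1/(d+1))/2`. Taking `log₂` then yields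
`log₂(N/Δ) ≥ log₂ N/(d+1) - 1`, and the lost `-N/2` is paid for by the linear term `N`.
-/

open Real

lemma le_rpow_div_of_rpow_add_one_le {Δ x d : ℝ} (hΔ : 0 ≤ Δ) (hx : 0 ≤ x) (hd : 0 < d + 1)
    (h : Δ ^ (d + 1) ≤ x ^ d) : Δ ≤ x ^ (d / (d + 1)) := by
  rwa [div_eq_mul_inv, rpow_mul hx, le_rpow_inv_iff_of_pos hΔ (rpow_nonneg hx d) hd]

lemma le_two_mul_rpow_of_rpow_add_one_le {Δ N d : ℝ} (hΔ : 0 ≤ Δ) (hN : 0 ≤ N) (hd : 0 < d + 1)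
    (h : Δ ^ (d + 1) ≤ (2 * N) ^ d) : Δ ≤ 2 * N ^ (d / (d + 1)) :=
  calc Δ ≤ (2 * N) ^ (d / (d + 1)) := le_rpow_div_of_rpow_add_one_le hΔ (by positivity) hd h
    _ = 2 ^ (d / (d + 1)) * N ^ (d / (d + 1)) := mul_rpow zero_le_two hN
    _ ≤ 2 * N ^ (d / (d + 1)) := by
      gcongr
      calc (2 : ℝ) ^ (d / (d + 1)) ≤ 2 ^ (1 : ℝ) :=
            rpow_le_rpow_of_exponent_le one_le_two ((div_le_one hd).2 (lt_add_one d).le)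
        _ = 2 := rpow_one 2

lemma half_mul_rpow_le_div_of_rpow_add_one_le {N Δ d : ℝ} (hN : 0 < N) (hΔ : 0 < Δ)
    (hd : 0 < d + 1) (h : Δ ^ (d + 1) ≤ (2 * N) ^ d) :
    1 / 2 * N ^ (1 / (d + 1)) ≤ N / Δ := by
  have hsplit : N ^ (1 / (d + 1)) * N ^ (d / (d + 1)) = N := by
    rw [← rpow_add hN, ← add_div, add_comm, div_self hd.ne', rpow_one]
  rw [le_div_iff₀ hΔ]
  calc 1 / 2 * N ^ (1 / (d + 1)) * Δ ≤ 1 / 2 * N ^ (1 / (d + 1)) * (2 * N ^ (d / (d + 1))) := by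
        gcongr
        exact le_two_mul_rpow_of_rpow_add_one_le hΔ.le hN.le hd h
    _ = N := by linear_combination hsplit

lemma logb_two_half_mul_rpow {N : ℝ} (hN : 0 < N) (p : ℝ) :
    logb 2 (1 / 2 * N ^ p) = p * logb 2 N - 1 := by
  rw [logb_mul (by norm_num) (rpow_pos_of_pos hN p).ne', logb_rpow_eq_mul_logb_of_pos hN,
    one_div, logb_inv, logb_self_eq_one one_lt_two]
  ring

lemma mul_logb_le_of_half_mul_rpow_le {N M q : ℝ} (hN : 0 < N) (h : 1 / 2 * N ^ (1 / q) ≤ M) :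
    1 / (2 * q) * N * logb 2 N ≤ N + N / 2 * logb 2 M := by
  have hlog : 1 / q * logb 2 N - 1 ≤ logb 2 M := by
    rw [← logb_two_half_mul_rpow hN]
    exact logb_le_logb_of_le one_lt_two (by positivity) h
  calc 1 / (2 * q) * N * logb 2 N = N + N / 2 * (1 / q * logb 2 N - 1) - N / 2 := by ring
    _ ≤ N + N / 2 * logb 2 M := by linarith [mul_le_mul_of_nonneg_left hlog (half_pos hN).le]

/-- In the first sorting case, the released potential covers the sorting
cost: for reals `N ≥ 1`, `Δ ≥ 1` and `d ≥ 1` with `(2N)^d ≥ Δ^(d+1)`, one has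
`N/Δ ≥ (1/2)·N^(1/(d+1))` and consequently
`N + (N/2)·log₂(N/Δ) ≥ (1/(2(d+1)))·N·log₂ N`. -/
theorem statement8 (N Δ d : ℝ) (hN : 1 ≤ N) (hΔ : 1 ≤ Δ) (hd : 1 ≤ d)
    (hsort : Δ ^ (d + 1) ≤ (2 * N) ^ d) :
    (1 / 2) * N ^ (1 / (d + 1)) ≤ N / Δ ∧
    (1 / (2 * (d + 1))) * N * Real.logb 2 N ≤ N + (N / 2) * Real.logb 2 (N / Δ) := by
  have hroot : 1 / 2 * N ^ (1 / (d + 1)) ≤ N / Δ :=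
    half_mul_rpow_le_div_of_rpow_add_one_le (by linarith) (by linarith) (by linarith) hsort
  exact ⟨hroot, mul_logb_le_of_half_mul_rpow_le (by linarith) hroot⟩
end

section
/- In the second sorting case, the released potential covers the sorting cost: for reals N ≥ 1, Δ ≥ 1 and ε > 0 with N^{1 + 1/(1+ε)} ≥ Δ², one has N/Δ ≥ N^{ε/(2(1+ε))} and consequently N + (N/2)·log₂(N/Δ) ≥ N + (ε/(4(1+ε)))·N·log₂ N. -/
open Real

lemma rpow_one_sub_half_le_div {N Δ a : ℝ} (hN : 0 < N) (hΔ : 0 < Δ)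
    (h : Δ ^ (2 : ℝ) ≤ N ^ a) : N ^ (1 - a / 2) ≤ N / Δ := by
  have hΔle : Δ ≤ N ^ (a / 2) := by
    have := rpow_le_rpow (by positivity) h (by norm_num : (0 : ℝ) ≤ 1 / 2)
    rwa [← rpow_mul hΔ.le, ← rpow_mul hN.le, show (2 : ℝ) * (1 / 2) = 1 by norm_num,
      rpow_one, ← div_eq_mul_one_div] at this
  rw [rpow_sub hN, rpow_one]
  exact div_le_div_of_nonneg_left hN.le hΔ hΔle

lemma mul_logb_le_logb_of_rpow_le {b x y s : ℝ} (hb : 1 < b) (hx : 0 < x) (h : x ^ s ≤ y) :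
    s * logb b x ≤ logb b y := by
  rw [← logb_rpow_eq_mul_logb_of_pos hx]
  exact logb_le_logb_of_le hb (by positivity) h

/-- In the second sorting case, the released potential covers the
sorting cost: for reals `N ≥ 1`, `Δ ≥ 1` and `ε > 0` with `N^(1 + 1/(1+ε)) ≥ Δ²`,
one has `N/Δ ≥ N^(ε/(2(1+ε)))` and consequently
`N + (N/2)·log₂(N/Δ) ≥ N + (ε/(4(1+ε)))·N·log₂ N`. -/
theorem statement9 (N Δ ε : ℝ) (hN : 1 ≤ N) (hΔ : 1 ≤ Δ) (hε : 0 < ε)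
    (hsort : Δ ^ (2 : ℝ) ≤ N ^ (1 + 1 / (1 + ε))) :
    N ^ (ε / (2 * (1 + ε))) ≤ N / Δ ∧
    N + (ε / (4 * (1 + ε))) * N * Real.logb 2 N ≤ N + (N / 2) * Real.logb 2 (N / Δ) := by
  have hN0 : 0 < N := by linarith
  have hexp : 1 - (1 + 1 / (1 + ε)) / 2 = ε / (2 * (1 + ε)) := by
    field_simp
    ring
  have hpow : N ^ (ε / (2 * (1 + ε))) ≤ N / Δ :=
    hexp ▸ rpow_one_sub_half_le_div hN0 (by linarith) hsort
  refine ⟨hpow, ?_⟩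
  have hlog := mul_logb_le_logb_of_rpow_le one_lt_two hN0 hpow
  have hsplit : ε / (4 * (1 + ε)) * N * logb 2 N = N / 2 * (ε / (2 * (1 + ε)) * logb 2 N) := by
    field_simp
    ring
  rw [hsplit]
  gcongr
end

section
/- The query-rank entropy is bounded below via the weighted median: if Δ ≤ N then 𝓑 = ∑_{i=1}^{q+1} Δ_i·log₂(N/Δ_i) ≥ (N/2)·log₂(N/Δ). -/
/-!
Only the gaps of size at most `Δ` are needed: they carry at least half of the `N + 1` elements,
and each of them contributes `Δ_i · log₂ (N / Δ_i) ≥ Δ_i · log₂ (N / Δ)`. The remaining terms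
are nonnegative because every gap is at most `N`, there being at least two gaps.
-/

open Finset Real

section EntropyBound

variable {b N x d : ℝ}

theorem mul_logb_div_self_nonneg (hb : 1 < b) (hx : 0 ≤ x) (hxN : x ≤ N) :
    0 ≤ x * logb b (N / x) := by
  rcases hx.eq_or_lt with rfl | hx
  · simp
  · exact mul_nonneg hx.le (logb_nonneg hb ((one_le_div hx).mpr hxN))

theorem mul_logb_div_le_mul_logb_div_self (hb : 1 < b) (hx : 0 ≤ x) (hxd : x ≤ d) (hd : 0 < d)
    (hdN : d ≤ N) : x * logb b (N / d) ≤ x * logb b (N / x) := by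
  rcases hx.eq_or_lt with rfl | hx
  · simp
  · have hN : 0 < N := hd.trans_le hdN
    exact mul_le_mul_of_nonneg_left
      (logb_le_logb_of_le hb (div_pos hN hd) (div_le_div_of_nonneg_left hN.le hx hxd)) hx.le

theorem mul_logb_div_le_sum_mul_logb_div {ι : Type*} {s : Finset ι} {x : ι → ℝ} {m : ℝ}
    (hb : 1 < b) (hx : ∀ i ∈ s, 0 ≤ x i) (hxN : ∀ i ∈ s, x i ≤ N) (hd : 0 ≤ d) (hdN : d ≤ N)
    (hm : m ≤ ∑ i ∈ s with x i ≤ d, x i) :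
    m * logb b (N / d) ≤ ∑ i ∈ s, x i * logb b (N / x i) := by
  have hterm : ∀ i ∈ s, 0 ≤ x i * logb b (N / x i) :=
    fun i hi => mul_logb_div_self_nonneg hb (hx i hi) (hxN i hi)
  -- for `d = 0` the left side is `m * logb b 0 = 0`
  rcases hd.eq_or_lt with rfl | hd
  · simpa using sum_nonneg hterm
  have hlog : 0 ≤ logb b (N / d) := logb_nonneg hb ((one_le_div hd).mpr hdN)
  calc m * logb b (N / d)
      ≤ (∑ i ∈ s with x i ≤ d, x i) * logb b (N / d) := mul_le_mul_of_nonneg_right hm hlog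
    _ = ∑ i ∈ s with x i ≤ d, x i * logb b (N / d) := sum_mul _ _ _
    _ ≤ ∑ i ∈ s with x i ≤ d, x i * logb b (N / x i) := by
        refine sum_le_sum fun i hi => ?_
        rw [mem_filter] at hi
        exact mul_logb_div_le_mul_logb_div_self hb (hx i hi.1) hi.2 hd hdN
    _ ≤ ∑ i ∈ s, x i * logb b (N / x i) :=
        sum_le_sum_of_subset_of_nonneg (filter_subset _ _) fun i hi _ => hterm i hi

end EntropyBound

theorem StrictMonoOn.sub_apply_pred_lt {r : ℕ → ℕ} {n i : ℕ} (hr : StrictMonoOn r (Set.Iic n))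
    (hn : 2 ≤ n) (hi : i ∈ Icc 1 n) : r i - r (i - 1) < r n - r 0 := by
  rw [mem_Icc] at hi
  have mem : ∀ {k}, k ≤ n → k ∈ Set.Iic n := Set.mem_Iic.mpr
  have hstep : r (i - 1) < r i := hr (mem (by omega)) (mem hi.2) (by omega)
  have h0 : r 0 ≤ r (i - 1) := hr.monotoneOn (mem (by omega)) (mem (by omega)) (Nat.zero_le _)
  rcases hi.2.lt_or_eq with hlt | rfl
  · have : r i < r n := hr (mem hi.2) (mem le_rfl) hlt
    omega
  · have : r 0 < r (i - 1) := hr (mem (by omega)) (mem (by omega)) (by omega)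
    omega

theorem statement12_general (N q : ℕ) (hq : 1 ≤ q)
    (r : ℕ → ℕ) (hr0 : r 0 = 0) (hrq : r (q + 1) = N + 1)
    (hmono : ∀ i, i ≤ q → r i < r (i + 1))
    (Δ : ℕ)
    (hΔge : N + 2 ≤ 2 * ∑ j ∈ (Finset.Icc 1 (q + 1)).filter
        (fun j => r j - r (j - 1) ≤ Δ), (r j - r (j - 1)))
    (hΔN : Δ ≤ N) :
    (N : ℝ) / 2 * Real.logb 2 ((N : ℝ) / (Δ : ℝ)) ≤
      ∑ i ∈ Finset.Icc 1 (q + 1),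
        ((r i - r (i - 1) : ℕ) : ℝ) *
          Real.logb 2 ((N : ℝ) / ((r i - r (i - 1) : ℕ) : ℝ)) := by
  have hr : StrictMonoOn r (Set.Iic (q + 1)) :=
    strictMonoOn_Iic_of_lt_succ fun i hi => hmono i (Nat.lt_succ_iff.mp hi)
  have hgap : ∀ i ∈ Icc 1 (q + 1), r i - r (i - 1) ≤ N := fun i hi => by
    have := hr.sub_apply_pred_lt (by omega) hi
    omega
  have hmass : (N : ℝ) / 2 ≤ ∑ i ∈ Icc 1 (q + 1) with ((r i - r (i - 1) : ℕ) : ℝ) ≤ Δ,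
      ((r i - r (i - 1) : ℕ) : ℝ) := by
    have : ((N + 2 : ℕ) : ℝ) ≤ ((2 * ∑ j ∈ Icc 1 (q + 1) with r j - r (j - 1) ≤ Δ,
        (r j - r (j - 1)) : ℕ) : ℝ) := by exact_mod_cast hΔge
    simp only [Nat.cast_le]
    push_cast at this
    linarith
  exact mul_logb_div_le_sum_mul_logb_div one_lt_two (fun _ _ => Nat.cast_nonneg _)
    (fun i hi => by exact_mod_cast hgap i hi) (Nat.cast_nonneg _) (by exact_mod_cast hΔN) hmass

/-- The query-rank entropy is bounded below via the weighted median: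
if `Δ ≤ N` then `𝓑 = ∑ Δ i · log₂(N / Δ i) ≥ (N/2)·log₂(N/Δ)`.  Here the gaps are
`Δ i = r i − r (i−1)` and `Δ` is the smallest element of `{Δ 1, …, Δ (q+1)}`
satisfying `2·∑_{j : Δ j ≤ Δ} Δ j ≥ N + 2`. -/
theorem statement12 (N q : ℕ) (hN : 1 ≤ N) (hq : 1 ≤ q)
    (r : ℕ → ℕ) (hr0 : r 0 = 0) (hrq : r (q + 1) = N + 1)
    (hmono : ∀ i, i ≤ q → r i < r (i + 1))
    (Δ : ℕ)
    (hΔmem : ∃ i ∈ Finset.Icc 1 (q + 1), r i - r (i - 1) = Δ)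
    (hΔge : N + 2 ≤ 2 * ∑ j ∈ (Finset.Icc 1 (q + 1)).filter
        (fun j => r j - r (j - 1) ≤ Δ), (r j - r (j - 1)))
    (hΔmin : ∀ i ∈ Finset.Icc 1 (q + 1),
        N + 2 ≤ 2 * ∑ j ∈ (Finset.Icc 1 (q + 1)).filter
            (fun j => r j - r (j - 1) ≤ r i - r (i - 1)), (r j - r (j - 1)) →
        Δ ≤ r i - r (i - 1))
    (hΔN : Δ ≤ N) :
    (N : ℝ) / 2 * Real.logb 2 ((N : ℝ) / (Δ : ℝ)) ≤
      ∑ i ∈ Finset.Icc 1 (q + 1),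
        ((r i - r (i - 1) : ℕ) : ℝ) *
          Real.logb 2 ((N : ℝ) / ((r i - r (i - 1) : ℕ) : ℝ)) :=
  statement12_general N q hq r hr0 hrq hmono Δ hΔge hΔN
end

section
/- In the first sorting case the entropy lower bound is of sorting order: if Δ ≤ N, d ≥ 1 is real and (2N)^d ≥ Δ^{d+1}, then 𝓑 = ∑_{i=1}^{q+1} Δ_i·log₂(N/Δ_i) ≥ (N/(2(d+1)))·log₂ N − N/2. (This justifies that 𝓑_{I/O} = Ω(Sort(N)) when the algorithm resorts to sorting.) -/
/-!
Let `c = log₂ (N / Δ)`. The sorting condition `Δ^(d+1) ≤ (2N)^d` gives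
`log₂ Δ ≤ (d/(d+1)) (1 + log₂ N)`, hence `c ≥ log₂ N / (d+1) - 1`. Every gap `Δᵢ ≤ Δ` contributes
at least `Δᵢ · c` to `𝓑`, every other gap contributes a nonnegative amount because `Δᵢ ≤ N`, and
the gaps of size at most `Δ` cover more than `N/2` elements, so `𝓑 ≥ (N/2) c`.
-/

open Real Finset

lemma mul_logb_div_nonneg {g N : ℝ} (hg : 0 ≤ g) (hgN : g ≤ N) : 0 ≤ g * logb 2 (N / g) := by
  rcases hg.eq_or_lt with rfl | hg
  · simp
  exact mul_nonneg hg.le (logb_nonneg one_lt_two ((one_le_div hg).2 hgN))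

lemma mul_logb_div_le_mul_logb_div {g Δ N : ℝ} (hN : 0 < N) (hg : 0 ≤ g) (hgΔ : g ≤ Δ) :
    g * logb 2 (N / Δ) ≤ g * logb 2 (N / g) := by
  rcases hg.eq_or_lt with rfl | hg
  · simp
  exact mul_le_mul_of_nonneg_left (logb_le_logb_of_le one_lt_two
    (div_pos hN (hg.trans_le hgΔ)) (div_le_div_of_nonneg_left hN.le hg hgΔ)) hg.le

lemma pos_of_sum_filter_le_pos {ι : Type*} {s : Finset ι} {g : ι → ℕ} {Δ : ℕ}
    (h : 0 < ∑ i ∈ s with g i ≤ Δ, g i) : 0 < Δ := by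
  obtain ⟨i, hi, hgi⟩ := exists_ne_zero_of_sum_ne_zero h.ne'
  exact (Nat.pos_of_ne_zero hgi).trans_le (mem_filter.1 hi).2

lemma half_mul_logb_div_le_sum_mul_logb_div {ι : Type*} (s : Finset ι) (g : ι → ℕ) {N Δ : ℕ}
    (hgN : ∀ i ∈ s, g i ≤ N) (hΔ : 0 < Δ) (hΔN : Δ ≤ N)
    (hmass : N ≤ 2 * ∑ i ∈ s with g i ≤ Δ, g i) :
    (N : ℝ) / 2 * logb 2 (N / Δ) ≤ ∑ i ∈ s, (g i : ℝ) * logb 2 (N / g i) := by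
  have hN : (0 : ℝ) < N := by exact_mod_cast hΔ.trans_le hΔN
  have hc : 0 ≤ logb 2 ((N : ℝ) / Δ) :=
    logb_nonneg one_lt_two ((one_le_div (by positivity)).2 (by exact_mod_cast hΔN))
  have hmassR : (N : ℝ) / 2 ≤ ∑ i ∈ s with g i ≤ Δ, (g i : ℝ) := by
    have : (N : ℝ) ≤ 2 * ∑ i ∈ s with g i ≤ Δ, (g i : ℝ) := by exact_mod_cast hmass
    linarith
  calc (N : ℝ) / 2 * logb 2 (N / Δ)
      ≤ (∑ i ∈ s with g i ≤ Δ, (g i : ℝ)) * logb 2 (N / Δ) :=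
        mul_le_mul_of_nonneg_right hmassR hc
    _ = ∑ i ∈ s with g i ≤ Δ, (g i : ℝ) * logb 2 (N / Δ) := sum_mul _ _ _
    _ ≤ ∑ i ∈ s with g i ≤ Δ, (g i : ℝ) * logb 2 (N / g i) :=
        sum_le_sum fun i hi => mul_logb_div_le_mul_logb_div hN (Nat.cast_nonneg _)
          (by exact_mod_cast (mem_filter.1 hi).2)
    _ ≤ ∑ i ∈ s, (g i : ℝ) * logb 2 (N / g i) :=
        sum_le_sum_of_subset_of_nonneg (filter_subset _ _) fun i hi _ =>
          mul_logb_div_nonneg (Nat.cast_nonneg _) (by exact_mod_cast hgN i hi)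

lemma div_sub_one_le_logb_div_of_rpow_le {N Δ d : ℝ} (hN : 0 < N) (hΔ : 0 < Δ) (hd : 0 < d + 1)
    (hsort : Δ ^ (d + 1) ≤ (2 * N) ^ d) : logb 2 N / (d + 1) - 1 ≤ logb 2 (N / Δ) := by
  have h := logb_le_logb_of_le one_lt_two (by positivity) hsort
  rw [logb_rpow_eq_mul_logb_of_pos hΔ, logb_rpow_eq_mul_logb_of_pos (by positivity),
    logb_mul two_ne_zero hN.ne', logb_self_eq_one one_lt_two] at h
  rw [logb_div hN.ne' hΔ.ne', div_sub_one hd.ne', div_le_iff₀ hd]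
  linarith

lemma sub_pred_le_of_strictMonoOn {N q : ℕ} {r : ℕ → ℕ} (hr : StrictMonoOn r (Set.Iic (q + 1)))
    (hq : 1 ≤ q) (hr0 : r 0 = 0) (hrq : r (q + 1) = N + 1) {i : ℕ} (hi : i ≤ q + 1) :
    r i - r (i - 1) ≤ N := by
  rcases hi.lt_or_eq with hi | rfl
  · have := hr (Set.mem_Iic.2 hi.le) (Set.mem_Iic.2 le_rfl) hi
    omega
  · have := hr (Set.mem_Iic.2 (Nat.zero_le _)) (Set.mem_Iic.2 (by omega : q ≤ q + 1))
      (by omega : 0 < q)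
    simp only [add_tsub_cancel_right]
    omega

theorem statement13_general (N q : ℕ) (hq : 1 ≤ q)
    (r : ℕ → ℕ) (hr0 : r 0 = 0) (hrq : r (q + 1) = N + 1)
    (hmono : ∀ i, i ≤ q → r i < r (i + 1))
    (Δ : ℕ)
    (hΔge : N + 2 ≤ 2 * ∑ j ∈ (Finset.Icc 1 (q + 1)).filter
        (fun j => r j - r (j - 1) ≤ Δ), (r j - r (j - 1)))
    (hΔN : Δ ≤ N)
    (d : ℝ) (hd : 1 ≤ d)
    (hsort : ((Δ : ℝ)) ^ (d + 1) ≤ (2 * (N : ℝ)) ^ d) :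
    (N : ℝ) / (2 * (d + 1)) * Real.logb 2 (N : ℝ) - (N : ℝ) / 2 ≤
      ∑ i ∈ Finset.Icc 1 (q + 1),
        ((r i - r (i - 1) : ℕ) : ℝ) *
          Real.logb 2 ((N : ℝ) / ((r i - r (i - 1) : ℕ) : ℝ)) := by
  have hΔ : 0 < Δ :=
    pos_of_sum_filter_le_pos (s := Icc 1 (q + 1)) (g := fun j => r j - r (j - 1)) (by omega)
  have hN : (0 : ℝ) < N := by exact_mod_cast hΔ.trans_le hΔN
  have hr : StrictMonoOn r (Set.Iic (q + 1)) :=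
    strictMonoOn_Iic_of_lt_succ fun m hm => hmono m (Nat.lt_succ_iff.1 hm)
  calc (N : ℝ) / (2 * (d + 1)) * logb 2 N - N / 2 = N / 2 * (logb 2 N / (d + 1) - 1) := by
        field_simp
    _ ≤ N / 2 * logb 2 (N / Δ) := mul_le_mul_of_nonneg_left
        (div_sub_one_le_logb_div_of_rpow_le hN (Nat.cast_pos.2 hΔ) (by linarith) hsort)
        (by positivity)
    _ ≤ _ := half_mul_logb_div_le_sum_mul_logb_div _ _
        (fun i hi => sub_pred_le_of_strictMonoOn hr hq hr0 hrq (mem_Icc.1 hi).2) hΔ hΔN (by omega)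

/-- In the first sorting case the entropy lower bound is of sorting
order: if `Δ ≤ N`, `d ≥ 1` is real and `(2N)^d ≥ Δ^(d+1)`, then
`𝓑 = ∑ Δ i · log₂(N / Δ i) ≥ (N/(2(d+1)))·log₂ N − N/2`.  Here the gaps are
`Δ i = r i − r (i−1)` and `Δ` is the smallest element of `{Δ 1, …, Δ (q+1)}`
satisfying `2·∑_{j : Δ j ≤ Δ} Δ j ≥ N + 2`. -/
theorem statement13 (N q : ℕ) (hN : 1 ≤ N) (hq : 1 ≤ q)
    (r : ℕ → ℕ) (hr0 : r 0 = 0) (hrq : r (q + 1) = N + 1)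
    (hmono : ∀ i, i ≤ q → r i < r (i + 1))
    (Δ : ℕ)
    (hΔmem : ∃ i ∈ Finset.Icc 1 (q + 1), r i - r (i - 1) = Δ)
    (hΔge : N + 2 ≤ 2 * ∑ j ∈ (Finset.Icc 1 (q + 1)).filter
        (fun j => r j - r (j - 1) ≤ Δ), (r j - r (j - 1)))
    (hΔmin : ∀ i ∈ Finset.Icc 1 (q + 1),
        N + 2 ≤ 2 * ∑ j ∈ (Finset.Icc 1 (q + 1)).filter
            (fun j => r j - r (j - 1) ≤ r i - r (i - 1)), (r j - r (j - 1)) →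
        Δ ≤ r i - r (i - 1))
    (hΔN : Δ ≤ N)
    (d : ℝ) (hd : 1 ≤ d)
    (hsort : ((Δ : ℝ)) ^ (d + 1) ≤ (2 * (N : ℝ)) ^ d) :
    (N : ℝ) / (2 * (d + 1)) * Real.logb 2 (N : ℝ) - (N : ℝ) / 2 ≤
      ∑ i ∈ Finset.Icc 1 (q + 1),
        ((r i - r (i - 1) : ℕ) : ℝ) *
          Real.logb 2 ((N : ℝ) / ((r i - r (i - 1) : ℕ) : ℝ)) :=
  statement13_general N q hq r hr0 hrq hmono Δ hΔge hΔN d hd hsort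
end

section
/- In the second sorting case the entropy lower bound is of sorting order: if Δ ≤ N, ε > 0 is real and N^{1 + 1/(1+ε)} ≥ Δ², then 𝓑 = ∑_{i=1}^{q+1} Δ_i·log₂(N/Δ_i) ≥ (ε/(4(1+ε)))·N·log₂ N. -/
/-!
Gaps of size at most `Δ` cover at least `N/2` elements, and each of their elements contributes
at least `log₂(N/Δ)` to the entropy; every other term is nonnegative because no gap exceeds `N`.
Taking logarithms in `Δ² ≤ N^(1 + 1/(1+ε))` gives `log₂(N/Δ) ≥ ε/(2(1+ε)) · log₂ N`.
-/

open Real Finset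

lemma sub_pred_lt_of_strictMonoOn {r : ℕ → ℕ} {n i : ℕ} (hr : StrictMonoOn r (Set.Iic n))
    (hn : 2 ≤ n) (hi : i ∈ Icc 1 n) : r i - r (i - 1) < r n := by
  rw [mem_Icc] at hi
  have hrn : r (n - 1) < r n := hr (Set.mem_Iic.2 (by omega)) Set.self_mem_Iic (by omega)
  have hr1 : r 0 < r (n - 1) :=
    hr (Set.mem_Iic.2 (by omega)) (Set.mem_Iic.2 (by omega)) (by omega)
  rcases hi.2.lt_or_eq with hlt | rfl
  · have := hr (Set.mem_Iic.2 hi.2) Set.self_mem_Iic hlt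
    omega
  · omega

lemma mul_logb_div_nonneg_s14 {b d N : ℝ} (hb : 1 < b) (hd : 0 ≤ d) (hdN : d ≤ N) :
    0 ≤ d * logb b (N / d) := by
  rcases hd.eq_or_lt with rfl | hd
  · simp
  · exact mul_nonneg hd.le (logb_nonneg hb ((one_le_div hd).2 hdN))

lemma mul_logb_div_le_mul_logb_div_s14 {b d Δ N : ℝ} (hb : 1 < b) (hN : 0 < N) (hd : 0 ≤ d)
    (hdΔ : d ≤ Δ) : d * logb b (N / Δ) ≤ d * logb b (N / d) := by
  rcases hd.eq_or_lt with rfl | hd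
  · simp
  · refine mul_le_mul_of_nonneg_left (logb_le_logb_of_le hb ?_ ?_) hd.le
    · exact div_pos hN (hd.trans_le hdΔ)
    · exact div_le_div_of_nonneg_left hN.le hd hdΔ

lemma sum_filter_mul_logb_div_le {ι : Type*} (s : Finset ι) (w : ι → ℝ) {b Δ N : ℝ}
    (hb : 1 < b) (hN : 0 < N) (hw : ∀ i ∈ s, 0 ≤ w i ∧ w i ≤ N) :
    (∑ i ∈ s with w i ≤ Δ, w i) * logb b (N / Δ) ≤
      ∑ i ∈ s, w i * logb b (N / w i) := by
  rw [sum_mul]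
  calc ∑ i ∈ s with w i ≤ Δ, w i * logb b (N / Δ)
      ≤ ∑ i ∈ s with w i ≤ Δ, w i * logb b (N / w i) := by
        refine sum_le_sum fun i hi => ?_
        rw [mem_filter] at hi
        exact mul_logb_div_le_mul_logb_div_s14 hb hN (hw i hi.1).1 hi.2
    _ ≤ ∑ i ∈ s, w i * logb b (N / w i) :=
        sum_le_sum_of_subset_of_nonneg (filter_subset _ _) fun i hi _ =>
          mul_logb_div_nonneg_s14 hb (hw i hi).1 (hw i hi).2

lemma mul_logb_le_logb_div_of_sq_le_rpow {b Δ N ε : ℝ} (hb : 1 < b) (hN : 0 < N) (hΔ : 0 < Δ)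
    (hε : 0 < ε) (h : Δ ^ (2 : ℝ) ≤ N ^ (1 + 1 / (1 + ε))) :
    ε / (2 * (1 + ε)) * logb b N ≤ logb b (N / Δ) := by
  have hlog : 2 * logb b Δ ≤ (1 + 1 / (1 + ε)) * logb b N := by
    rw [← logb_rpow_eq_mul_logb_of_pos hΔ, ← logb_rpow_eq_mul_logb_of_pos hN]
    exact logb_le_logb_of_le hb (by positivity) h
  have hcoef : ε / (2 * (1 + ε)) = 1 - (1 + 1 / (1 + ε)) / 2 := by
    field_simp
    ring
  rw [logb_div hN.ne' hΔ.ne', hcoef]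
  linarith

theorem statement14_general (N q : ℕ) (hN : 1 ≤ N) (hq : 1 ≤ q)
    (r : ℕ → ℕ) (hrq : r (q + 1) = N + 1)
    (hmono : ∀ i, i ≤ q → r i < r (i + 1))
    (Δ : ℕ)
    (hΔge : N + 2 ≤ 2 * ∑ j ∈ (Finset.Icc 1 (q + 1)).filter
        (fun j => r j - r (j - 1) ≤ Δ), (r j - r (j - 1)))
    (ε : ℝ) (hε : 0 < ε)
    (hsort : ((Δ : ℝ)) ^ (2 : ℝ) ≤ ((N : ℝ)) ^ (1 + 1 / (1 + ε))) :
    ε / (4 * (1 + ε)) * (N : ℝ) * Real.logb 2 (N : ℝ) ≤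
      ∑ i ∈ Finset.Icc 1 (q + 1),
        ((r i - r (i - 1) : ℕ) : ℝ) *
          Real.logb 2 ((N : ℝ) / ((r i - r (i - 1) : ℕ) : ℝ)) := by
  have hr : StrictMonoOn r (Set.Iic (q + 1)) :=
    strictMonoOn_Iic_of_lt_succ fun m hm => by simpa using hmono m (by omega)
  have hgap : ∀ i ∈ Icc 1 (q + 1), r i - r (i - 1) ≤ N := fun i hi => by
    have := sub_pred_lt_of_strictMonoOn hr (by omega) hi
    omega
  have hΔ : 0 < Δ := by
    by_contra! hΔ0
    have : ∑ j ∈ Icc 1 (q + 1) with r j - r (j - 1) ≤ Δ, (r j - r (j - 1)) = 0 :=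
      sum_eq_zero fun j hj => by rw [mem_filter] at hj; omega
    omega
  have hhalf : (N : ℝ) / 2 ≤
      ∑ j ∈ Icc 1 (q + 1) with r j - r (j - 1) ≤ Δ, ((r j - r (j - 1) : ℕ) : ℝ) := by
    have : ((N + 2 : ℕ) : ℝ) ≤ ((2 * ∑ j ∈ Icc 1 (q + 1) with r j - r (j - 1) ≤ Δ,
        (r j - r (j - 1)) : ℕ) : ℝ) := by exact_mod_cast hΔge
    push_cast at this
    linarith
  have hN' : (0 : ℝ) < N := by exact_mod_cast hN
  have hlogN : 0 ≤ logb 2 (N : ℝ) := logb_nonneg one_lt_two (by exact_mod_cast hN)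
  have hentropy := sum_filter_mul_logb_div_le (Icc 1 (q + 1))
    (fun i => ((r i - r (i - 1) : ℕ) : ℝ)) (Δ := Δ) one_lt_two hN'
    fun i hi => ⟨Nat.cast_nonneg _, by exact_mod_cast hgap i hi⟩
  simp only [Nat.cast_le] at hentropy
  calc ε / (4 * (1 + ε)) * (N : ℝ) * logb 2 (N : ℝ)
      = (N : ℝ) / 2 * (ε / (2 * (1 + ε)) * logb 2 (N : ℝ)) := by
        field_simp
        ring
    _ ≤ (∑ j ∈ Icc 1 (q + 1) with r j - r (j - 1) ≤ Δ, ((r j - r (j - 1) : ℕ) : ℝ)) *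
          logb 2 ((N : ℝ) / Δ) :=
        mul_le_mul hhalf
          (mul_logb_le_logb_div_of_sq_le_rpow one_lt_two hN' (by exact_mod_cast hΔ) hε hsort)
          (mul_nonneg (by positivity) hlogN) (by positivity)
    _ ≤ _ := hentropy

/-- In the second sorting case the entropy lower bound is of sorting
order: if `Δ ≤ N`, `ε > 0` is real and `N^(1 + 1/(1+ε)) ≥ Δ²`, then
`𝓑 = ∑ Δ i · log₂(N / Δ i) ≥ (ε/(4(1+ε)))·N·log₂ N`.  Here the gaps are
`Δ i = r i − r (i−1)` and `Δ` is the smallest element of `{Δ 1, …, Δ (q+1)}`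
satisfying `2·∑_{j : Δ j ≤ Δ} Δ j ≥ N + 2`. -/
theorem statement14 (N q : ℕ) (hN : 1 ≤ N) (hq : 1 ≤ q)
    (r : ℕ → ℕ) (hr0 : r 0 = 0) (hrq : r (q + 1) = N + 1)
    (hmono : ∀ i, i ≤ q → r i < r (i + 1))
    (Δ : ℕ)
    (hΔmem : ∃ i ∈ Finset.Icc 1 (q + 1), r i - r (i - 1) = Δ)
    (hΔge : N + 2 ≤ 2 * ∑ j ∈ (Finset.Icc 1 (q + 1)).filter
        (fun j => r j - r (j - 1) ≤ Δ), (r j - r (j - 1)))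
    (hΔmin : ∀ i ∈ Finset.Icc 1 (q + 1),
        N + 2 ≤ 2 * ∑ j ∈ (Finset.Icc 1 (q + 1)).filter
            (fun j => r j - r (j - 1) ≤ r i - r (i - 1)), (r j - r (j - 1)) →
        Δ ≤ r i - r (i - 1))
    (hΔN : Δ ≤ N)
    (ε : ℝ) (hε : 0 < ε)
    (hsort : ((Δ : ℝ)) ^ (2 : ℝ) ≤ ((N : ℝ)) ^ (1 + 1 / (1 + ε))) :
    ε / (4 * (1 + ε)) * (N : ℝ) * Real.logb 2 (N : ℝ) ≤
      ∑ i ∈ Finset.Icc 1 (q + 1),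
        ((r i - r (i - 1) : ℕ) : ℝ) *
          Real.logb 2 ((N : ℝ) / ((r i - r (i - 1) : ℕ) : ℝ)) :=
  statement14_general N q hN hq r hrq hmono Δ hΔge ε hε hsort
end

section
/- In the non-sorting case, the I/O potential released by one partitioning round is at least (1/2)·(N/B + (N/B)·log_M(N/Δ)); precisely, if Δ ≤ N, M > 1 and B > 0, then (1/B)·[(∑_{i : Δ_i ≤ Δ} Δ_i)·log_M(N/Δ) + ∑_{i : Δ_i ≥ Δ} Δ_i] ≥ (1/2)·(N/B + (N/B)·log_M(N/Δ)). -/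
/-!
Let `S` be the total size of the gaps of size at most `Δ`, and `T` that of the gaps of size at
least `Δ`. By the choice of `Δ`, `2 S ≥ N + 2`. The gaps of size strictly below `Δ` cannot
cover `(N + 2) / 2` elements (otherwise the largest of them would have been chosen instead of
`Δ`), and all gaps together cover at least `N + 1` elements, so `2 T ≥ N + 1` as well.
Since `log_M (N / Δ) ≥ 0`, both halves of the bound follow.
-/

open Finset

lemma tsub_le_sum_Icc_tsub (r : ℕ → ℕ) (n : ℕ) :
    r n - r 0 ≤ ∑ i ∈ Icc 1 n, (r i - r (i - 1)) := by
  induction n with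
  | zero => simp
  | succ n ih =>
    rw [sum_Icc_succ_top (Nat.le_add_left 1 n), Nat.add_sub_cancel]
    omega

lemma two_mul_sum_filter_lt_lt_of_forall_le {ι : Type*} (s : Finset ι) (g : ι → ℕ) (Δ K : ℕ)
    (hK : 0 < K)
    (hmin : ∀ i ∈ s, K ≤ 2 * ∑ j ∈ s with g j ≤ g i, g j → Δ ≤ g i) :
    2 * ∑ j ∈ s with g j < Δ, g j < K := by
  rcases (s.filter (g · < Δ)).eq_empty_or_nonempty with hempty | hne
  · simpa [hempty] using hK
  obtain ⟨i, hi, hmax⟩ := exists_max_image _ g hne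
  rw [mem_filter] at hi
  have hsub : ∑ j ∈ s with g j < Δ, g j ≤ ∑ j ∈ s with g j ≤ g i, g j :=
    sum_le_sum_of_subset fun j hj ↦ mem_filter.2 ⟨(mem_filter.1 hj).1, hmax j hj⟩
  have hbelow : 2 * ∑ j ∈ s with g j ≤ g i, g j < K := by
    by_contra! h
    exact absurd (hmin i hi.1 h) (not_le.2 hi.2)
  omega

lemma logb_natCast_div_nonneg {M : ℝ} (hM : 1 < M) {n d : ℕ} (hd : d ≤ n) :
    0 ≤ Real.logb M ((n : ℝ) / d) := by
  rcases Nat.eq_zero_or_pos d with rfl | hpos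
  · simp
  exact Real.logb_nonneg hM ((one_le_div (by exact_mod_cast hpos)).2 (by exact_mod_cast hd))

lemma half_mul_add_le_inv_mul {N S T L B : ℝ} (hS : N ≤ 2 * S) (hT : N ≤ 2 * T) (hL : 0 ≤ L)
    (hB : 0 < B) :
    1 / 2 * (N / B + N / B * L) ≤ 1 / B * (S * L + T) := by
  have hsum : N + N * L ≤ 2 * (S * L + T) := by linarith [mul_le_mul_of_nonneg_right hS hL]
  calc 1 / 2 * (N / B + N / B * L) = (N + N * L) * B⁻¹ / 2 := by ring
    _ ≤ 2 * (S * L + T) * B⁻¹ / 2 := by gcongr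
    _ = 1 / B * (S * L + T) := by ring

theorem statement15_general (N q : ℕ)
    (r : ℕ → ℕ) (hr0 : r 0 = 0) (hrq : r (q + 1) = N + 1)
    (Δ : ℕ)
    (hΔge : N + 2 ≤ 2 * ∑ j ∈ (Finset.Icc 1 (q + 1)).filter
        (fun j => r j - r (j - 1) ≤ Δ), (r j - r (j - 1)))
    (hΔmin : ∀ i ∈ Finset.Icc 1 (q + 1),
        N + 2 ≤ 2 * ∑ j ∈ (Finset.Icc 1 (q + 1)).filter
            (fun j => r j - r (j - 1) ≤ r i - r (i - 1)), (r j - r (j - 1)) →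
        Δ ≤ r i - r (i - 1))
    (hΔN : Δ ≤ N)
    (M B : ℝ) (hM : 1 < M) (hB : 0 < B) :
    (1 / 2) * ((N : ℝ) / B + (N : ℝ) / B * Real.logb M ((N : ℝ) / (Δ : ℝ))) ≤
      (1 / B) *
        (((∑ i ∈ (Finset.Icc 1 (q + 1)).filter
              (fun i => r i - r (i - 1) ≤ Δ), (r i - r (i - 1)) : ℕ) : ℝ)
            * Real.logb M ((N : ℝ) / (Δ : ℝ))
          + ((∑ i ∈ (Finset.Icc 1 (q + 1)).filter
              (fun i => Δ ≤ r i - r (i - 1)), (r i - r (i - 1)) : ℕ) : ℝ)) := by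
  have htotal : N + 1 ≤ ∑ i ∈ Icc 1 (q + 1), (r i - r (i - 1)) := by
    simpa [hr0, hrq] using tsub_le_sum_Icc_tsub r (q + 1)
  have hsmall := two_mul_sum_filter_lt_lt_of_forall_le (Icc 1 (q + 1))
    (fun i ↦ r i - r (i - 1)) Δ (N + 2) (Nat.succ_pos _) hΔmin
  have hsplit := sum_filter_add_sum_filter_not (Icc 1 (q + 1))
    (fun i ↦ Δ ≤ r i - r (i - 1)) (fun i ↦ r i - r (i - 1))
  simp only [not_le] at hsplit
  have hlarge : N ≤ 2 * ∑ i ∈ Icc 1 (q + 1) with Δ ≤ r i - r (i - 1), (r i - r (i - 1)) := by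
    omega
  exact half_mul_add_le_inv_mul (by exact_mod_cast (by omega)) (by exact_mod_cast hlarge)
    (logb_natCast_div_nonneg hM hΔN) hB

/-- In the non-sorting case, the I/O potential released by one
partitioning round is at least `(1/2)·(N/B + (N/B)·log_M(N/Δ))`; precisely, if
`Δ ≤ N`, `M > 1` and `B > 0`, then
`(1/B)·[(∑_{i : Δ i ≤ Δ} Δ i)·log_M(N/Δ) + ∑_{i : Δ i ≥ Δ} Δ i]
  ≥ (1/2)·(N/B + (N/B)·log_M(N/Δ))`.  Here the gaps are `Δ i = r i − r (i−1)` and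
`Δ` is the smallest element of `{Δ 1, …, Δ (q+1)}` satisfying
`2·∑_{j : Δ j ≤ Δ} Δ j ≥ N + 2`. -/
theorem statement15 (N q : ℕ) (hN : 1 ≤ N) (hq : 1 ≤ q)
    (r : ℕ → ℕ) (hr0 : r 0 = 0) (hrq : r (q + 1) = N + 1)
    (hmono : ∀ i, i ≤ q → r i < r (i + 1))
    (Δ : ℕ)
    (hΔmem : ∃ i ∈ Finset.Icc 1 (q + 1), r i - r (i - 1) = Δ)
    (hΔge : N + 2 ≤ 2 * ∑ j ∈ (Finset.Icc 1 (q + 1)).filter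
        (fun j => r j - r (j - 1) ≤ Δ), (r j - r (j - 1)))
    (hΔmin : ∀ i ∈ Finset.Icc 1 (q + 1),
        N + 2 ≤ 2 * ∑ j ∈ (Finset.Icc 1 (q + 1)).filter
            (fun j => r j - r (j - 1) ≤ r i - r (i - 1)), (r j - r (j - 1)) →
        Δ ≤ r i - r (i - 1))
    (hΔN : Δ ≤ N)
    (M B : ℝ) (hM : 1 < M) (hB : 0 < B) :
    (1 / 2) * ((N : ℝ) / B + (N : ℝ) / B * Real.logb M ((N : ℝ) / (Δ : ℝ))) ≤
      (1 / B) *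
        (((∑ i ∈ (Finset.Icc 1 (q + 1)).filter
              (fun i => r i - r (i - 1) ≤ Δ), (r i - r (i - 1)) : ℕ) : ℝ)
            * Real.logb M ((N : ℝ) / (Δ : ℝ))
          + ((∑ i ∈ (Finset.Icc 1 (q + 1)).filter
              (fun i => Δ ≤ r i - r (i - 1)), (r i - r (i - 1)) : ℕ) : ℝ)) :=
  statement15_general N q r hr0 hrq Δ hΔge hΔmin hΔN M B hM hB
end

section
/- In the first sorting case, the released I/O potential covers the funnelsort cost: for reals N ≥ 1, Δ ≥ 1, d ≥ 1, M ≥ 2 and B > 0 with (2N)^d ≥ Δ^{d+1}, one has N/B + (N/(2B))·log_M(N/Δ) ≥ (1/(2(d+1)))·(N/B)·log_M N; i.e., the released I/O potential is Ω((N/B)·log_M N). -/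
/-!
Taking `log_M` of the sorting-case condition gives `(d+1) log_M Δ ≤ d (log_M 2 + log_M N)`,
hence `(d+1) log_M (N/Δ) ≥ log_M N - d log_M 2 ≥ log_M N - d` because `M ≥ 2`. Multiplying
by `N / (2B(d+1))` turns this into the claimed bound.
-/

open Real

lemma mul_logb_le_mul_logb_of_rpow_le {b x y r s : ℝ} (hb : 1 < b) (hx : 0 < x) (hy : 0 < y)
    (h : x ^ r ≤ y ^ s) : r * logb b x ≤ s * logb b y := by
  rw [← logb_rpow_eq_mul_logb_of_pos hx, ← logb_rpow_eq_mul_logb_of_pos hy]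
  exact logb_le_logb_of_le hb (by positivity) h

lemma logb_le_of_rpow_le_two_mul_rpow {N Δ d M : ℝ} (hN : 0 < N) (hΔ : 0 < Δ) (hd : 0 ≤ d)
    (hM : 2 ≤ M) (hsort : Δ ^ (d + 1) ≤ (2 * N) ^ d) :
    logb M N ≤ 2 * (d + 1) + (d + 1) * logb M (N / Δ) := by
  have hM1 : 1 < M := by linarith
  have hlog : (d + 1) * logb M Δ ≤ d * (logb M 2 + logb M N) := by
    rw [← logb_mul two_ne_zero hN.ne']
    exact mul_logb_le_mul_logb_of_rpow_le hM1 hΔ (by positivity) hsort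
  have hlog2 : d * logb M 2 ≤ d := by
    refine mul_le_of_le_one_right hd ?_
    simpa only [logb_self_eq_one hM1] using logb_le_logb_of_le hM1 two_pos hM
  rw [logb_div hN.ne' hΔ.ne']
  linarith

/-- In the first sorting case, the released I/O potential covers the
funnelsort cost: for reals `N ≥ 1`, `Δ ≥ 1`, `d ≥ 1`, `M ≥ 2` and `B > 0` with
`(2N)^d ≥ Δ^(d+1)`, one has
`N/B + (N/(2B))·log_M(N/Δ) ≥ (1/(2(d+1)))·(N/B)·log_M N`;
i.e. the released I/O potential is `Ω((N/B)·log_M N)`. -/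
theorem statement16 (N Δ d M B : ℝ) (hN : 1 ≤ N) (hΔ : 1 ≤ Δ) (hd : 1 ≤ d)
    (hM : 2 ≤ M) (hB : 0 < B)
    (hsort : Δ ^ (d + 1) ≤ (2 * N) ^ d) :
    (1 / (2 * (d + 1))) * (N / B) * Real.logb M N ≤
      N / B + (N / (2 * B)) * Real.logb M (N / Δ) := by
  have hN0 : 0 < N := by linarith
  have hd1 : 0 < d + 1 := by linarith
  have key := logb_le_of_rpow_le_two_mul_rpow hN0 (by linarith) (by linarith) hM hsort
  have hc : 0 ≤ N / (2 * B * (d + 1)) := by positivity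
  calc (1 / (2 * (d + 1))) * (N / B) * logb M N
      = N / (2 * B * (d + 1)) * logb M N := by field_simp
    _ ≤ N / (2 * B * (d + 1)) * (2 * (d + 1) + (d + 1) * logb M (N / Δ)) := by gcongr
    _ = N / B + (N / (2 * B)) * logb M (N / Δ) := by field_simp
end

section
/- If all q interior query ranks are clustered in a narrow range, the query-rank entropy is linear: if q ≥ 1, N ≥ 2 and r_q − r_1 ≤ N/log₂ N, then 𝓑 = ∑_{i=1}^{q+1} Δ_i·log₂(N/Δ_i) ≤ 3N. (This makes precise the paper's example that queries confined to a range of size O(N/log N) have entropy bound O(N), in contrast to the bound N(1 + log q).) -/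
/-!
The two outer gaps are harmless: `x ↦ x log₂ (N / x)` is maximised at `x = N / e`, with value
`N / (e ln 2) ≤ N`. Each interior gap `Δ` contributes at most `Δ log₂ N`, and the interior gaps sum
to `r q - r 1 ≤ N / log₂ N`, so together they contribute at most `N`.
-/

open Finset Real

namespace Real

lemma log_le_div_exp_one {y : ℝ} (hy : 0 ≤ y) : log y ≤ y / exp 1 := by
  obtain rfl | hy := hy.eq_or_lt
  · simp
  have h := log_le_sub_one_of_pos (div_pos hy (exp_pos 1))
  rw [log_div hy.ne' (exp_pos 1).ne', log_exp] at h
  linarith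

lemma one_le_exp_one_mul_log_two : 1 ≤ exp 1 * log 2 := by
  nlinarith [exp_one_gt_d9, log_two_gt_d9]

lemma mul_logb_two_div_le {N x : ℝ} (hN : 0 ≤ N) (hx : 0 ≤ x) : x * logb 2 (N / x) ≤ N := by
  obtain rfl | hx := hx.eq_or_lt
  · simpa
  have hlog : x * log (N / x) ≤ N / exp 1 :=
    calc x * log (N / x) ≤ x * (N / x / exp 1) := by
          gcongr; exact log_le_div_exp_one (by positivity)
      _ = N / exp 1 := by field_simp
  calc x * logb 2 (N / x) = x * log (N / x) / log 2 := by rw [logb, mul_div_assoc]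
    _ ≤ N / exp 1 / log 2 := by gcongr
    _ = N / (exp 1 * log 2) := div_div _ _ _
    _ ≤ N := div_le_self hN one_le_exp_one_mul_log_two

lemma natCast_mul_logb_div_le {b : ℝ} (hb : 1 < b) (N : ℝ) (n : ℕ) :
    (n : ℝ) * logb b (N / n) ≤ n * logb b N := by
  rcases eq_or_ne N 0 with rfl | hN
  · simp
  rcases n.eq_zero_or_pos with rfl | hn
  · simp
  have hn' : (n : ℝ) ≠ 0 := by positivity
  rw [logb_div hN hn']
  have : 0 ≤ logb b n := logb_nonneg hb (by exact_mod_cast hn)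
  nlinarith [(Nat.cast_nonneg n : (0 : ℝ) ≤ n)]

end Real

lemma Finset.sum_Ioc_sub_pred {G : Type*} [AddCommGroup G] (f : ℕ → G) {m n : ℕ} (hmn : m ≤ n) :
    ∑ i ∈ Ioc m n, (f i - f (i - 1)) = f n - f m := by
  induction n, hmn using Nat.le_induction with
  | base => simp
  | succ n hmn ih => rw [sum_Ioc_succ_top hmn, ih, Nat.add_sub_cancel]; abel

lemma Finset.sum_Icc_one_eq_first_add_sum_Ioc_add_last {M : Type*} [AddCommMonoid M]
    (f : ℕ → M) {q : ℕ} (hq : 1 ≤ q) :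
    ∑ i ∈ Icc 1 (q + 1), f i = f 1 + ∑ i ∈ Ioc 1 q, f i + f (q + 1) := by
  rw [sum_Icc_succ_top (by omega), Icc_eq_cons_Ioc hq, sum_cons]

lemma sum_Ioc_gap_mul_logb_le {b : ℝ} (hb : 1 < b) (N : ℝ) (r : ℕ → ℕ) {m n : ℕ} (hmn : m ≤ n)
    (hmono : ∀ i ∈ Ico m n, r i ≤ r (i + 1)) :
    ∑ i ∈ Ioc m n, ((r i - r (i - 1) : ℕ) : ℝ) * logb b (N / ((r i - r (i - 1) : ℕ) : ℝ)) ≤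
      ((r n : ℝ) - r m) * logb b N := by
  have hgap : ∀ i ∈ Ioc m n, ((r i - r (i - 1) : ℕ) : ℝ) = r i - r (i - 1) := by
    intro i hi
    rw [mem_Ioc] at hi
    have h := hmono (i - 1) (mem_Ico.2 ⟨by omega, by omega⟩)
    rw [Nat.sub_add_cancel (by omega)] at h
    exact Nat.cast_sub h
  calc _ ≤ ∑ i ∈ Ioc m n, ((r i - r (i - 1) : ℕ) : ℝ) * logb b N :=
        sum_le_sum fun i _ => natCast_mul_logb_div_le hb N _
    _ = ((r n : ℝ) - r m) * logb b N := by
        rw [← sum_mul, sum_congr rfl hgap, sum_Ioc_sub_pred _ hmn]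

theorem statement17_general (N q : ℕ) (hq : 1 ≤ q)
    (r : ℕ → ℕ)
    (hmono : ∀ i, i ≤ q → r i < r (i + 1))
    (hnarrow : (r q : ℝ) - (r 1 : ℝ) ≤ (N : ℝ) / Real.logb 2 (N : ℝ)) :
    ∑ i ∈ Finset.Icc 1 (q + 1),
        ((r i - r (i - 1) : ℕ) : ℝ) *
          Real.logb 2 ((N : ℝ) / ((r i - r (i - 1) : ℕ) : ℝ)) ≤ 3 * (N : ℝ) := by
  have hN : (0 : ℝ) ≤ N := N.cast_nonneg
  have hL : 0 ≤ logb 2 (N : ℝ) := div_nonneg (log_natCast_nonneg N) (log_nonneg one_le_two)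
  have hfirst := mul_logb_two_div_le hN (r 1 - r (1 - 1)).cast_nonneg
  have hlast := mul_logb_two_div_le hN (r (q + 1) - r (q + 1 - 1)).cast_nonneg
  have hmiddle :=
    calc ∑ i ∈ Ioc 1 q, ((r i - r (i - 1) : ℕ) : ℝ) * logb 2 (N / ((r i - r (i - 1) : ℕ) : ℝ))
        ≤ ((r q : ℝ) - r 1) * logb 2 N :=
          sum_Ioc_gap_mul_logb_le one_lt_two N r hq fun i hi => (hmono i (mem_Ico.1 hi).2.le).le
      _ ≤ N / logb 2 N * logb 2 N := mul_le_mul_of_nonneg_right hnarrow hL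
      _ ≤ N := by
          rcases hL.eq_or_lt with hL0 | hL0
          · simp [← hL0]
          · rw [div_mul_cancel₀ _ hL0.ne']
  rw [sum_Icc_one_eq_first_add_sum_Ioc_add_last _ hq]
  linarith

/-- If all `q` interior query ranks are clustered in a narrow range,
the query-rank entropy is linear: if `q ≥ 1`, `N ≥ 2` and `r q − r 1 ≤ N / log₂ N`,
then `𝓑 = ∑ Δ i · log₂(N / Δ i) ≤ 3N`, where the gaps are `Δ i = r i − r (i−1)`. -/
theorem statement17 (N q : ℕ) (hN : 2 ≤ N) (hq : 1 ≤ q)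
    (r : ℕ → ℕ) (hr0 : r 0 = 0) (hrq : r (q + 1) = N + 1)
    (hmono : ∀ i, i ≤ q → r i < r (i + 1))
    (hnarrow : (r q : ℝ) - (r 1 : ℝ) ≤ (N : ℝ) / Real.logb 2 (N : ℝ)) :
    ∑ i ∈ Finset.Icc 1 (q + 1),
        ((r i - r (i - 1) : ℕ) : ℝ) *
          Real.logb 2 ((N : ℝ) / ((r i - r (i - 1) : ℕ) : ℝ)) ≤ 3 * (N : ℝ) :=
  statement17_general N q hq r hmono hnarrow
end
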